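/- arXiv:1412.3250 — 2 statements merged into one kernel-verified Lean document; each statement's English description precedes it below -/
import Mathlib

section
/- If a nonzero vector v ∈ ℝ³ satisfies Mⁿ v = λ v for some n ≥ 1 and some positive real λ, where M is an invertible 3×3 real matrix all of whose real eigenvalues are positive and whose eigenspace dimensions are preserved under taking powers, then M v = λ^{1/n} v. -/
open Module Module.End Finset

lemma eig_le_pow {V : Type*} [AddCommGroup V] [Module ℝ V] (f : Module.End ℝ V)
    (κ : ℝ) (m : ℕ) :
    Module.End.eigenspace f κ ≤ Module.End.eigenspace (f ^ m) (κ ^ m) := by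
  intro x hx
  rw [Module.End.mem_eigenspace_iff] at hx ⊢
  induction m with
  | zero => simp
  | succ k ih =>
    rw [pow_succ', pow_succ', Module.End.mul_apply, ih, map_smul, hx, smul_smul, mul_comm]

lemma mulVecLin_pow' (M : Matrix (Fin 3) (Fin 3) ℝ) (m : ℕ) :
    Matrix.mulVecLin (M ^ m) = (Matrix.mulVecLin M) ^ m := by
  induction m with
  | zero => ext x i <;> simp [Matrix.mulVecLin_one]
  | succ k ih => rw [pow_succ, pow_succ, Matrix.mulVecLin_mul, ih]; rfl

theorem stmt8 (M : Matrix (Fin 3) (Fin 3) ℝ) (hM : IsUnit M)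
    (hmult : ∀ n : ℕ, 1 ≤ n →
      ∑ᶠ μ : ℝ, Module.finrank ℝ
          (Module.End.eigenspace (Matrix.mulVecLin (M ^ n)) μ) =
        ∑ᶠ μ : ℝ, Module.finrank ℝ
          (Module.End.eigenspace (Matrix.mulVecLin M) μ))
    (hpos : ∀ n : ℕ, 1 ≤ n → ∀ μ : ℝ,
      Module.End.HasEigenvalue (Matrix.mulVecLin (M ^ n)) μ → 0 < μ)
    (v : Fin 3 → ℝ) (hv : v ≠ 0) (n : ℕ) (hn : 1 ≤ n) (lam : ℝ) (hlam : 0 < lam)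
    (heig : (M ^ n).mulVec v = lam • v) :
    M.mulVec v = (lam ^ ((1 : ℝ) / n)) • v := by
  have hn0 : (n : ℝ) ≠ 0 := Nat.cast_ne_zero.mpr (by omega)
  set f := Matrix.mulVecLin M with hf
  set a : ℝ → ℕ := fun κ => Module.finrank ℝ (Module.End.eigenspace f κ) with ha_def
  set b : ℝ → ℕ := fun μ => Module.finrank ℝ (Module.End.eigenspace (f ^ n) μ) with hb_def
  -- support facts
  have hbot : ∀ (g : Module.End ℝ (Fin 3 → ℝ)) (μ : ℝ),
      Module.finrank ℝ (Module.End.eigenspace g μ) ≠ 0 ↔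
        Module.End.HasEigenvalue g μ := by
    intro g μ
    simp [Module.End.hasEigenvalue_iff, ne_eq, Submodule.finrank_eq_zero]
  have ha : (Function.support a).Finite := by
    apply Set.Finite.subset (Module.End.finite_hasEigenvalue f)
    intro κ hκ
    exact (hbot f κ).mp hκ
  have hb : (Function.support b).Finite := by
    apply Set.Finite.subset (Module.End.finite_hasEigenvalue (f ^ n))
    intro κ hκ
    exact (hbot (f ^ n) κ).mp hκ
  set S := ha.toFinset with hS
  set T := hb.toFinset with hT
  -- positivity of eigenvalues
  have hSpos : ∀ κ ∈ S, 0 < κ := by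
    intro κ hκ
    rw [hS, Set.Finite.mem_toFinset] at hκ
    refine hpos 1 le_rfl κ ?_
    rw [pow_one]
    exact (hbot f κ).mp hκ
  have hTpos : ∀ μ ∈ T, 0 < μ := by
    intro μ hμ
    rw [hT, Set.Finite.mem_toFinset] at hμ
    refine hpos n hn μ ?_
    rw [mulVecLin_pow']
    exact (hbot (f ^ n) μ).mp hμ
  -- eigenspace inclusion and consequences
  have hle : ∀ κ : ℝ, Module.End.eigenspace f κ ≤
      Module.End.eigenspace (f ^ n) (κ ^ n) := fun κ => eig_le_pow f κ n
  have hab : ∀ κ : ℝ, a κ ≤ b (κ ^ n) := fun κ => Submodule.finrank_mono (hle κ)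
  have himg : S.image (· ^ n) ⊆ T := by
    intro μ hμ
    rw [Finset.mem_image] at hμ
    obtain ⟨κ, hκS, rfl⟩ := hμ
    rw [hT, Set.Finite.mem_toFinset, Function.mem_support]
    rw [hS, Set.Finite.mem_toFinset, Function.mem_support] at hκS
    exact fun h => hκS (Nat.le_zero.mp (h ▸ hab κ))
  have hinj : ∀ x ∈ S, ∀ y ∈ S, x ^ n = y ^ n → x = y := by
    intro x hx y hy hxy
    exact (pow_left_strictMonoOn₀ (M₀ := ℝ) (n := n) (by omega)).injOn
      (le_of_lt (hSpos x hx)) (le_of_lt (hSpos y hy)) hxy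
  -- the chain of inequalities, forced to equalities by hmult
  have h1 : ∑ κ ∈ S, a κ ≤ ∑ κ ∈ S, b (κ ^ n) :=
    Finset.sum_le_sum fun κ _ => hab κ
  have h2 : ∑ κ ∈ S, b (κ ^ n) = ∑ μ ∈ S.image (· ^ n), b μ :=
    (Finset.sum_image hinj).symm
  have h3 : ∑ μ ∈ S.image (· ^ n), b μ ≤ ∑ μ ∈ T, b μ :=
    Finset.sum_le_sum_of_subset himg
  have htot : ∑ μ ∈ T, b μ = ∑ κ ∈ S, a κ := by
    have := hmult n hn
    rw [mulVecLin_pow'] at this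
    rw [hT, hS, ← finsum_eq_sum b hb, ← finsum_eq_sum a ha]
    exact this
  have heqS : ∀ κ ∈ S, a κ = b (κ ^ n) := by
    refine (Finset.sum_eq_sum_iff_of_le fun κ _ => hab κ).mp ?_
    omega
  -- lam is an eigenvalue of f ^ n
  have hvmem : v ∈ Module.End.eigenspace (f ^ n) lam := by
    rw [Module.End.mem_eigenspace_iff, ← mulVecLin_pow']
    exact heig
  have hlamT : lam ∈ T := by
    rw [hT, Set.Finite.mem_toFinset, Function.mem_support, hbot]
    exact Module.End.hasEigenvalue_of_hasEigenvector ⟨hvmem, hv⟩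
  -- lam is in the image of S
  have hlamimg : lam ∈ S.image (· ^ n) := by
    by_contra hcon
    have hlt : ∑ μ ∈ S.image (· ^ n), b μ < ∑ μ ∈ T, b μ :=
      Finset.sum_lt_sum_of_subset himg hlamT hcon
        (Nat.pos_of_ne_zero ((hbot (f ^ n) lam).mpr
          (Module.End.hasEigenvalue_of_hasEigenvector ⟨hvmem, hv⟩)))
        (fun _ _ _ => Nat.zero_le _)
    omega
  obtain ⟨κ, hκS, hκn⟩ := Finset.mem_image.mp hlamimg
  -- eigenspaces coincide
  have hspace : Module.End.eigenspace f κ = Module.End.eigenspace (f ^ n) lam := by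
    have hq := heqS κ hκS
    have h1 := hle κ
    rw [hκn] at hq h1
    exact Submodule.eq_of_le_of_finrank_le h1 hq.symm.le
  have hfv : f v = κ • v := by
    have : v ∈ Module.End.eigenspace f κ := hspace ▸ hvmem
    rwa [Module.End.mem_eigenspace_iff] at this
  -- κ = lam ^ (1/n)
  have hκpos : 0 < κ := hSpos κ hκS
  have hκval : lam ^ ((1 : ℝ) / n) = κ := by
    rw [← hκn, ← Real.rpow_natCast κ n, ← Real.rpow_mul (le_of_lt hκpos)]
    rw [mul_one_div, div_self hn0, Real.rpow_one]
  rw [hκval]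
  exact hfv
end

section
/- For each integer N ≥ 4, the smaller root w₁(N) = 2(15 - 12N + 3N² - 2√(48 - 64N + 32N² - 8N³ + N⁴)) / (3(3 - 4N + N²)) of the equation u*(N,w) = 2/9 is a well-defined real number, and w₁(N) converges to 2/3 from below as N → ∞. -/
/-!
With `t = (N - 2)²` the radicand factors as `t (t + 8)`, and rationalising the numerator gives the
closed form `2/3 - w₁(N) = 16 / (3 (√(t (t + 8)) + t + 2))` whenever `t ≠ 1`. The right-hand side
is positive and tends to `0`.
-/

open Filter Topology

/-- The smaller root `w₁(N)` of the equation `u*(N,w) = 2/9`. -/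
noncomputable def w1 (N : ℕ) : ℝ :=
  2 * (15 - 12 * (N : ℝ) + 3 * (N : ℝ) ^ 2 -
      2 * Real.sqrt (48 - 64 * (N : ℝ) + 32 * (N : ℝ) ^ 2 - 8 * (N : ℝ) ^ 3 + (N : ℝ) ^ 4)) /
    (3 * (3 - 4 * (N : ℝ) + (N : ℝ) ^ 2))

lemma radicand_eq (x : ℝ) :
    48 - 64 * x + 32 * x ^ 2 - 8 * x ^ 3 + x ^ 4 = (x - 2) ^ 2 * ((x - 2) ^ 2 + 8) := by
  ring

lemma radicand_nonneg (x : ℝ) : 0 ≤ 48 - 64 * x + 32 * x ^ 2 - 8 * x ^ 3 + x ^ 4 := by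
  rw [radicand_eq]
  positivity

lemma denominator_eq (x : ℝ) : 3 - 4 * x + x ^ 2 = (x - 1) * (x - 3) := by
  ring

lemma w1_eq_two_thirds_sub {N : ℕ} (h1 : N ≠ 1) (h3 : N ≠ 3) :
    w1 N = 2 / 3 - 16 / (3 * (√((N - 2) ^ 2 * ((N - 2) ^ 2 + 8)) + ((N - 2) ^ 2 + 2))) := by
  set t : ℝ := ((N : ℝ) - 2) ^ 2
  set s := √(t * (t + 8)) with hs
  have hs_sq : s ^ 2 = t * (t + 8) := Real.sq_sqrt (by positivity)
  have hden : 3 - 4 * (N : ℝ) + N ^ 2 ≠ 0 := by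
    rw [denominator_eq]
    exact mul_ne_zero (sub_ne_zero.2 (by exact_mod_cast h1)) (sub_ne_zero.2 (by exact_mod_cast h3))
  have hsum : 3 * (s + (t + 2)) ≠ 0 := by positivity
  rw [w1, radicand_eq, ← hs, eq_sub_iff_add_eq,
    div_add_div _ _ (mul_ne_zero three_ne_zero hden) hsum, div_eq_iff (by positivity)]
  linear_combination -12 * hs_sq

lemma w1_lt_two_thirds {N : ℕ} (h1 : N ≠ 1) (h3 : N ≠ 3) : w1 N < 2 / 3 := by
  rw [w1_eq_two_thirds_sub h1 h3]
  exact sub_lt_self _ (by positivity)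

lemma tendsto_w1 : Tendsto w1 atTop (𝓝 (2 / 3)) := by
  have hsq : Tendsto (fun N : ℕ ↦ ((N : ℝ) - 2) ^ 2 + 2) atTop atTop :=
    tendsto_atTop_add_const_right _ _ <| (tendsto_pow_atTop two_ne_zero).comp <|
      tendsto_atTop_add_const_right _ _ tendsto_natCast_atTop_atTop
  have hden : Tendsto (fun N : ℕ ↦
      3 * (√(((N : ℝ) - 2) ^ 2 * ((N - 2) ^ 2 + 8)) + ((N - 2) ^ 2 + 2))) atTop atTop :=
    (Tendsto.nonneg_add_atTop (fun _ ↦ Real.sqrt_nonneg _) hsq).const_mul_atTop three_pos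
  have hgap := (tendsto_const_nhds (x := (16 : ℝ))).div_atTop hden
  rw [show (2 / 3 : ℝ) = 2 / 3 - 0 by ring]
  refine (tendsto_const_nhds.sub hgap).congr' ?_
  filter_upwards [eventually_ge_atTop 4] with N hN
  exact (w1_eq_two_thirds_sub (by omega) (by omega)).symm

theorem stmt17 :
    (∀ N : ℕ, 4 ≤ N →
      0 ≤ 48 - 64 * (N : ℝ) + 32 * (N : ℝ) ^ 2 - 8 * (N : ℝ) ^ 3 + (N : ℝ) ^ 4 ∧
      3 * (3 - 4 * (N : ℝ) + (N : ℝ) ^ 2) ≠ 0 ∧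
      w1 N < 2/3) ∧
    Filter.Tendsto w1 Filter.atTop (nhds (2/3)) := by
  refine ⟨fun N hN ↦ ⟨radicand_nonneg N, ?_, w1_lt_two_thirds (by omega) (by omega)⟩, tendsto_w1⟩
  have hx : (4 : ℝ) ≤ N := by exact_mod_cast hN
  rw [denominator_eq]
  exact mul_ne_zero three_ne_zero (mul_pos (by linarith) (by linarith)).ne'
end
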